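/- Consider the iteration: given a feasible point Z⁽ᵏ⁾ in a nonempty convex feasible set, choose (L⁽ᵏ⁾, R⁽ᵏ⁾) from the top-2n left and right singular vectors of Z⁽ᵏ⁾, then let Z⁽ᵏ⁺¹⁾ minimize φ(Z) = ‖Z‖_∗ − tr(L⁽ᵏ⁾ Z (R⁽ᵏ⁾)ᵀ) over the feasible set. Then the sequence α_k := ‖Z⁽ᵏ⁾‖_{∗,2n} (truncated nuclear norm) is monotonically non-increasing. -/

import Mathlib

/-!
Since `Z (k + 1)` minimises `φ_k(Y) = ‖Y‖_∗ - tr(L_k Y R_kᵀ)` over `S ∋ Z k`, and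
`tr(L_k Z_k R_kᵀ)` is the Ky Fan `2n`-norm of `Z k`, we get `φ_k(Z (k + 1)) ≤ α_k`. Conversely,
`tr(L Y Rᵀ)` is at most the Ky Fan `2n`-norm of `Y` whenever `L` and `R` have `2n` orthonormal
rows, so `α_{k+1} ≤ φ_k(Z (k + 1))`.

For that trace bound, expand in an orthonormal eigenbasis `v_j` of `Yᵀ Y`, with eigenvalues `σ_j²`:
by AM-GM, `tr(L Y Rᵀ) = Σ_j ⟪R v_j, L Y v_j⟫ ≤ Σ_j σ_j c_j` with
`c_j = (‖R v_j‖² + ‖L Y v_j‖² / σ_j²) / 2 ∈ [0, 1]`, and Bessel's inequality gives `Σ_j c_j ≤ 2n`.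
A combination `Σ_j σ_j c_j` with such weights is at most the sum of the `2n` largest `σ_j`.
-/

open Matrix

/-- The singular values of a real matrix `X` (square roots of the eigenvalues of `XᴴX`),
arranged in decreasing order, as a function `ℕ → ℝ` which is `0` from the number of
columns onwards. -/
noncomputable def svals {I J : Type*} [Fintype I] [Fintype J] [DecidableEq J]
    (X : Matrix I J ℝ) : ℕ → ℝ := fun i =>
  let f : Fin (Fintype.card J) → ℝ := fun j =>
    Real.sqrt ((show (Xᵀ * X).IsHermitian by
        simpa only [Matrix.conjTranspose_eq_transpose_of_trivial] using
          Matrix.isHermitian_conjTranspose_mul_self X).eigenvalues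
      ((Fintype.equivFin J).symm j))
  if h : i < Fintype.card J then f (Tuple.sort f (Fin.rev ⟨i, h⟩)) else 0

open Finset

theorem sum_mul_le_sum_of_le_threshold {ι : Type*} [Fintype ι] [DecidableEq ι] (s : Finset ι)
    (f c : ι → ℝ) {τ : ℝ} (hτ : 0 ≤ τ) (hs : ∀ p ∈ s, τ ≤ f p) (hsc : ∀ p ∉ s, f p ≤ τ)
    (hc0 : ∀ p, 0 ≤ c p) (hc1 : ∀ p, c p ≤ 1) (hcs : ∑ p, c p ≤ #s) :
    ∑ p, f p * c p ≤ ∑ p ∈ s, f p := by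
  have hterm : ∀ p, f p * c p ≤
      (if p ∈ s then f p else 0) + τ * (c p - if p ∈ s then 1 else 0) := by
    intro p
    split_ifs with hp
    · nlinarith [hs p hp, hc1 p]
    · nlinarith [hsc p hp, hc0 p]
  calc ∑ p, f p * c p
      ≤ ∑ p, ((if p ∈ s then f p else 0) + τ * (c p - if p ∈ s then 1 else 0)) :=
        sum_le_sum fun p _ => hterm p
    _ = ∑ p ∈ s, f p + τ * (∑ p, c p - #s) := by
        simp [sum_add_distrib, ← mul_sum, sum_sub_distrib]
    _ ≤ ∑ p ∈ s, f p := by nlinarith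

noncomputable def sortedDesc {N : ℕ} (f : Fin N → ℝ) (i : ℕ) : ℝ :=
  if h : i < N then f (Tuple.sort f (Fin.rev ⟨i, h⟩)) else 0

theorem sum_mul_le_sum_range_sortedDesc {N : ℕ} (f c : Fin N → ℝ) (m : ℕ) (hf : ∀ p, 0 ≤ f p)
    (hc0 : ∀ p, 0 ≤ c p) (hc1 : ∀ p, c p ≤ 1) (hcs : ∑ p, c p ≤ m) :
    ∑ p, f p * c p ≤ ∑ i ∈ range m, sortedDesc f i := by
  set e : Fin N ≃ Fin N := Fin.revPerm.trans (Tuple.sort f)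
  have hfe : ∀ p, f (e p) = sortedDesc f p := fun p => by simp [sortedDesc, e]
  have hanti : Antitone (f ∘ e) := fun p q hpq =>
    Tuple.monotone_sort f (Fin.rev_le_rev.mpr hpq)
  set s : Finset (Fin N) := {p | (p : ℕ) < m}
  have hs : ∀ p, p ∈ s ↔ (p : ℕ) < m := by simp [s]
  have hcard : ∑ p, c (e p) ≤ #s := by
    rw [e.sum_comp c, Fin.card_filter_val_lt, Nat.cast_min]
    refine le_min ?_ hcs
    simpa using sum_le_sum fun p (_ : p ∈ univ) => hc1 p
  -- the threshold is the `m`-th largest value of `f`, or `0` if `f` has at most `m` values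
  have hthreshold := sum_mul_le_sum_of_le_threshold s (f ∘ e) (c ∘ e)
    (τ := if h : m < N then f (e ⟨m, h⟩) else 0)
    (by split_ifs <;> simp [hf])
    (fun p hp => by
      split_ifs with h
      · exact hanti (Fin.le_def.mpr (show (p : ℕ) ≤ m by have := (hs p).mp hp; omega))
      · exact hf _)
    (fun p hp => by
      have hpm : m ≤ (p : ℕ) := not_lt.mp (mt (hs p).mpr hp)
      rw [dif_pos (by omega)]
      exact hanti (Fin.le_def.mpr hpm))
    (fun p => hc0 _) (fun p => hc1 _) hcard
  calc ∑ p, f p * c p = ∑ p, f (e p) * c (e p) := (e.sum_comp fun p => f p * c p).symm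
    _ ≤ ∑ p ∈ s, f (e p) := hthreshold
    _ = ∑ i ∈ (range N).filter (· < m), sortedDesc f i := by
        rw [sum_filter, sum_filter,
          ← Fin.sum_univ_eq_sum_range (fun i => if i < m then sortedDesc f i else 0)]
        simp only [hfe]
    _ = ∑ i ∈ range m, sortedDesc f i := by
        refine sum_subset (fun i hi => by simp only [mem_filter, mem_range] at hi ⊢; omega)
          fun i hi hi' => ?_
        simp only [mem_range, mem_filter, not_and, not_lt] at hi hi'
        exact dif_neg (by omega)

theorem sum_sq_dotProduct_div_le_dotProduct_self {I K : Type*} [Fintype I] [Fintype K]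
    [DecidableEq K] {w : K → I → ℝ} {μ : K → ℝ}
    (hw : ∀ i j, w i ⬝ᵥ w j = if i = j then μ j else 0) (a : I → ℝ) :
    ∑ j, (a ⬝ᵥ w j) ^ 2 / μ j ≤ a ⬝ᵥ a := by
  set c : K → ℝ := fun j => a ⬝ᵥ w j / μ j
  set s : I → ℝ := ∑ j, c j • w j
  have has : a ⬝ᵥ s = ∑ j, (a ⬝ᵥ w j) ^ 2 / μ j := by
    simp only [s, c, dotProduct_sum, dotProduct_smul, smul_eq_mul]
    exact sum_congr rfl fun j _ => by ring
  have hss : s ⬝ᵥ s = ∑ j, (a ⬝ᵥ w j) ^ 2 / μ j := by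
    simp only [s, dotProduct_sum, sum_dotProduct, smul_dotProduct, dotProduct_smul, hw,
      smul_eq_mul, mul_ite, mul_zero, sum_ite_eq', mem_univ, if_true]
    refine sum_congr rfl fun j _ => ?_
    rcases eq_or_ne (μ j) 0 with h | h
    · simp [h]
    · simp only [c]
      field_simp
  have hnonneg : 0 ≤ (a - s) ⬝ᵥ (a - s) := dotProduct_star_self_nonneg _
  rw [sub_dotProduct, dotProduct_sub, dotProduct_sub, dotProduct_comm s a, has, hss] at hnonneg
  linarith

theorem dotProduct_rows_eq_ite_of_mul_transpose_eq_one {I K : Type*} [Fintype I] [DecidableEq K]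
    {M : Matrix K I ℝ} (hM : M * Mᵀ = 1) (i j : K) :
    M i ⬝ᵥ M j = if i = j then 1 else 0 := by
  rw [← one_apply, ← hM]
  rfl

theorem sum_sq_dotProduct_row_eq_mulVec_dotProduct_mulVec {I K : Type*} [Fintype I] [Fintype K]
    (M : Matrix K I ℝ) (x : I → ℝ) : ∑ r, (x ⬝ᵥ M r) ^ 2 = (M *ᵥ x) ⬝ᵥ (M *ᵥ x) := by
  simp only [sq, dotProduct_comm x]
  rfl

theorem mulVec_dotProduct_mulVec_self_le {I K : Type*} [Fintype I] [Fintype K] [DecidableEq K]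
    {M : Matrix K I ℝ} (hM : M * Mᵀ = 1) (x : I → ℝ) :
    (M *ᵥ x) ⬝ᵥ (M *ᵥ x) ≤ x ⬝ᵥ x := by
  simpa [sum_sq_dotProduct_row_eq_mulVec_dotProduct_mulVec] using
    sum_sq_dotProduct_div_le_dotProduct_self (dotProduct_rows_eq_ite_of_mul_transpose_eq_one hM) x

theorem sum_mulVec_dotProduct_mulVec_self_div_le_card {I J K : Type*} [Fintype I] [Fintype J]
    [Fintype K] [DecidableEq J] [DecidableEq K] {M : Matrix K I ℝ} (hM : M * Mᵀ = 1)
    {w : J → I → ℝ} {μ : J → ℝ} (hw : ∀ i j, w i ⬝ᵥ w j = if i = j then μ j else 0) :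
    ∑ j, (M *ᵥ w j) ⬝ᵥ (M *ᵥ w j) / μ j ≤ Fintype.card K :=
  calc ∑ j, (M *ᵥ w j) ⬝ᵥ (M *ᵥ w j) / μ j = ∑ r, ∑ j, (M r ⬝ᵥ w j) ^ 2 / μ j := by
        simp only [← sum_sq_dotProduct_row_eq_mulVec_dotProduct_mulVec, sum_div,
          dotProduct_comm (M _)]
        exact sum_comm
    _ ≤ ∑ r, M r ⬝ᵥ M r := sum_le_sum fun r _ => sum_sq_dotProduct_div_le_dotProduct_self hw _
    _ = Fintype.card K := by simp [dotProduct_rows_eq_ite_of_mul_transpose_eq_one hM]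

theorem dotProduct_le_sqrt_mul {K : Type*} [Fintype K] (p q : K → ℝ) {μ : ℝ} (hμ : 0 ≤ μ)
    (hq : q ⬝ᵥ q ≤ μ) : p ⬝ᵥ q ≤ √μ * ((p ⬝ᵥ p + q ⬝ᵥ q / μ) / 2) := by
  rcases hμ.eq_or_lt with rfl | hμ
  · have : q = 0 := dotProduct_self_eq_zero.mp (le_antisymm hq (dotProduct_star_self_nonneg q))
    simp [this]
  · set t := √μ
    have ht : 0 < t := Real.sqrt_pos.mpr hμ
    have htt : t ^ 2 = μ := Real.sq_sqrt hμ.le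
    have hnonneg : 0 ≤ (t • p - q) ⬝ᵥ (t • p - q) := dotProduct_star_self_nonneg _
    simp only [sub_dotProduct, dotProduct_sub, smul_dotProduct, dotProduct_smul, smul_eq_mul,
      dotProduct_comm q p] at hnonneg
    rw [← htt]
    field_simp
    nlinarith

theorem Matrix.trace_eq_sum_dotProduct_mulVec {ι J : Type*} [Fintype ι] [Fintype J]
    [DecidableEq J] (M : Matrix J J ℝ) (b : OrthonormalBasis ι ℝ (EuclideanSpace ℝ J)) :
    M.trace = ∑ i, ⇑(b i) ⬝ᵥ (M *ᵥ ⇑(b i)) := by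
  rw [← Matrix.trace_toLin_eq M (PiLp.basisFun 2 ℝ J), ← toLpLin_eq_toLin,
    LinearMap.trace_eq_sum_inner _ b]
  simp only [EuclideanSpace.inner_eq_star_dotProduct, toLpLin_apply, star_trivial,
    dotProduct_comm]

theorem OrthonormalBasis.dotProduct_eq_ite {J : Type*} [Fintype J] [DecidableEq J]
    (b : OrthonormalBasis J ℝ (EuclideanSpace ℝ J)) (i j : J) :
    ⇑(b i) ⬝ᵥ ⇑(b j) = if i = j then 1 else 0 := by
  rw [← orthonormal_iff_ite.mp b.orthonormal i j, EuclideanSpace.inner_eq_star_dotProduct,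
    dotProduct_comm]
  rfl

theorem Matrix.IsHermitian.mulVec_eigenvectorBasis_dotProduct {I J : Type*} [Fintype I]
    [Fintype J] [DecidableEq J] {Y : Matrix I J ℝ} (hA : (Yᵀ * Y).IsHermitian) (i j : J) :
    (Y *ᵥ ⇑(hA.eigenvectorBasis i)) ⬝ᵥ (Y *ᵥ ⇑(hA.eigenvectorBasis j)) =
      if i = j then hA.eigenvalues j else 0 := by
  rw [dotProduct_comm, dotProduct_mulVec, ← mulVec_transpose, mulVec_mulVec,
    hA.mulVec_eigenvectorBasis, smul_dotProduct, OrthonormalBasis.dotProduct_eq_ite, smul_eq_mul,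
    mul_ite, mul_one, mul_zero]
  simp only [eq_comm]

theorem sum_mulVec_dotProduct_mulVec_le_sum_range_sortedDesc {I I' J K : Type*} [Fintype I]
    [Fintype I'] [Fintype J] [Fintype K] [DecidableEq J] [DecidableEq K]
    {L : Matrix K I ℝ} {R : Matrix K I' ℝ} (hL : L * Lᵀ = 1) (hR : R * Rᵀ = 1)
    {v : J → I' → ℝ} {w : J → I → ℝ} {μ : J → ℝ}
    (hv : ∀ i j, v i ⬝ᵥ v j = if i = j then 1 else 0)
    (hw : ∀ i j, w i ⬝ᵥ w j = if i = j then μ j else 0) :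
    ∑ j, (R *ᵥ v j) ⬝ᵥ (L *ᵥ w j) ≤
      ∑ i ∈ range (Fintype.card K), sortedDesc (fun p => √(μ ((Fintype.equivFin J).symm p))) i := by
  have hμ : ∀ j, 0 ≤ μ j := fun j => by simpa [hw] using dotProduct_star_self_nonneg (w j)
  have hRv : ∀ j, (R *ᵥ v j) ⬝ᵥ (R *ᵥ v j) ≤ 1 := fun j =>
    (mulVec_dotProduct_mulVec_self_le hR _).trans_eq (by simp [hv])
  have hLw : ∀ j, (L *ᵥ w j) ⬝ᵥ (L *ᵥ w j) ≤ μ j := fun j =>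
    (mulVec_dotProduct_mulVec_self_le hL _).trans_eq (by simp [hw])
  set c : J → ℝ := fun j => ((R *ᵥ v j) ⬝ᵥ (R *ᵥ v j) + (L *ᵥ w j) ⬝ᵥ (L *ᵥ w j) / μ j) / 2
  have hc0 : ∀ j, 0 ≤ c j := fun j => div_nonneg (add_nonneg (dotProduct_star_self_nonneg _)
    (div_nonneg (dotProduct_star_self_nonneg _) (hμ j))) zero_le_two
  have hc1 : ∀ j, c j ≤ 1 := fun j => by
    simp only [c]
    linarith [div_le_one_of_le₀ (hLw j) (hμ j), hRv j]
  have hcs : ∑ j, c j ≤ Fintype.card K := by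
    have hRsum := sum_mulVec_dotProduct_mulVec_self_div_le_card hR hv
    have hLsum := sum_mulVec_dotProduct_mulVec_self_div_le_card hL hw
    simp only [div_one] at hRsum
    simp only [c, ← sum_div, sum_add_distrib]
    linarith
  set e := Fintype.equivFin J
  calc ∑ j, (R *ᵥ v j) ⬝ᵥ (L *ᵥ w j) ≤ ∑ j, √(μ j) * c j :=
        sum_le_sum fun j _ => dotProduct_le_sqrt_mul _ _ (hμ j) (hLw j)
    _ = ∑ p, √(μ (e.symm p)) * c (e.symm p) := (e.symm.sum_comp fun j => √(μ j) * c j).symm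
    _ ≤ _ := sum_mul_le_sum_range_sortedDesc _ _ _ (fun _ => Real.sqrt_nonneg _)
        (fun _ => hc0 _) (fun _ => hc1 _) ((e.symm.sum_comp c).trans_le hcs)

theorem trace_mul_mul_transpose_le_sum_svals {I J K : Type*} [Fintype I] [Fintype J] [Fintype K]
    [DecidableEq J] [DecidableEq K] (Y : Matrix I J ℝ) {L : Matrix K I ℝ} {R : Matrix K J ℝ}
    (hL : L * Lᵀ = 1) (hR : R * Rᵀ = 1) :
    (L * Y * Rᵀ).trace ≤ ∑ i ∈ range (Fintype.card K), svals Y i := by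
  have hA : (Yᵀ * Y).IsHermitian := by
    simpa only [conjTranspose_eq_transpose_of_trivial] using isHermitian_conjTranspose_mul_self Y
  set b := hA.eigenvectorBasis
  calc (L * Y * Rᵀ).trace = ∑ j, (R *ᵥ b j) ⬝ᵥ (L *ᵥ (Y *ᵥ b j)) := by
        rw [trace_mul_comm, trace_eq_sum_dotProduct_mulVec _ b]
        simp only [← mulVec_mulVec, dotProduct_mulVec, vecMul_transpose]
    -- `svals Y` unfolds to `sortedDesc` of the square roots of the eigenvalues of `Yᵀ * Y`
    _ ≤ ∑ i ∈ range (Fintype.card K), svals Y i :=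
        sum_mulVec_dotProduct_mulVec_le_sum_range_sortedDesc hL hR b.dotProduct_eq_ite
          hA.mulVec_eigenvectorBasis_dotProduct

theorem stmt_14_general {n : ℕ} (S : Set (Matrix (Fin (4 * n)) (Fin (3 * n)) ℝ))
    (Z : ℕ → Matrix (Fin (4 * n)) (Fin (3 * n)) ℝ)
    (L : ℕ → Matrix (Fin (2 * n)) (Fin (4 * n)) ℝ)
    (R : ℕ → Matrix (Fin (2 * n)) (Fin (3 * n)) ℝ)
    (hfeas : ∀ k, Z k ∈ S)
    (hL : ∀ k, L k * (L k)ᵀ = 1) (hR : ∀ k, R k * (R k)ᵀ = 1)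
    (htop : ∀ k, (L k * Z k * (R k)ᵀ).trace = ∑ i ∈ Finset.range (2 * n), svals (Z k) i)
    (hmin : ∀ k, ∀ Y ∈ S,
      (∑ i ∈ Finset.range (3 * n), svals (Z (k + 1)) i) - (L k * Z (k + 1) * (R k)ᵀ).trace ≤
        (∑ i ∈ Finset.range (3 * n), svals Y i) - (L k * Y * (R k)ᵀ).trace) :
    ∀ k, (∑ i ∈ Finset.Ico (2 * n) (3 * n), svals (Z (k + 1)) i) ≤
      ∑ i ∈ Finset.Ico (2 * n) (3 * n), svals (Z k) i := by
  intro k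
  have hkyfan := trace_mul_mul_transpose_le_sum_svals (Z (k + 1)) (hL k) (hR k)
  rw [Fintype.card_fin] at hkyfan
  have hstep := hmin k (Z k) (hfeas k)
  rw [sum_Ico_eq_sub _ (by omega), sum_Ico_eq_sub _ (by omega)]
  linarith [htop k]

/-- Monotone convergence of the sequential convex procedure: if at each step `(L k, R k)`
are partial isometries built from the top-`2n` singular vectors of `Z k` (so that
`tr(L k · Z k · (R k)ᵀ)` attains the Ky Fan `2n`-norm of `Z k`), and `Z (k+1)` minimizes
`φ(Y) = ‖Y‖_∗ − tr(L k · Y · (R k)ᵀ)` over the (nonempty convex) feasible set `S`, then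
the truncated nuclear norms `α_k = Σ_{i>2n} σᵢ(Z k)` are monotonically non-increasing. -/
theorem stmt_14 {n : ℕ} (S : Set (Matrix (Fin (4 * n)) (Fin (3 * n)) ℝ))
    (hS : S.Nonempty) (hconv : Convex ℝ S)
    (Z : ℕ → Matrix (Fin (4 * n)) (Fin (3 * n)) ℝ)
    (L : ℕ → Matrix (Fin (2 * n)) (Fin (4 * n)) ℝ)
    (R : ℕ → Matrix (Fin (2 * n)) (Fin (3 * n)) ℝ)
    (hfeas : ∀ k, Z k ∈ S)
    (hL : ∀ k, L k * (L k)ᵀ = 1) (hR : ∀ k, R k * (R k)ᵀ = 1)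
    (htop : ∀ k, (L k * Z k * (R k)ᵀ).trace = ∑ i ∈ Finset.range (2 * n), svals (Z k) i)
    (hmin : ∀ k, ∀ Y ∈ S,
      (∑ i ∈ Finset.range (3 * n), svals (Z (k + 1)) i) - (L k * Z (k + 1) * (R k)ᵀ).trace ≤
        (∑ i ∈ Finset.range (3 * n), svals Y i) - (L k * Y * (R k)ᵀ).trace) :
    ∀ k, (∑ i ∈ Finset.Ico (2 * n) (3 * n), svals (Z (k + 1)) i) ≤
      ∑ i ∈ Finset.Ico (2 * n) (3 * n), svals (Z k) i :=
  stmt_14_general S Z L R hfeas hL hR htop hmin
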